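/- Let C be a compact convex body in ℝ², centrally symmetric with center p, and suppose C is not a Euclidean ball. Then C can be partitioned into two subsets each of diameter strictly less than diam(C). (Equivalently: among centrally symmetric planar convex bodies, only Euclidean balls have Borsuk number 3.) -/

import Mathlib

/-!
Let `R` be the largest distance from `p` to a point of `C`; the symmetric pair `z, 2p - z` with
`z` at distance `R` shows `2R ≤ diam C`. As `C` is convex but not the ball `B(p, R)`, some point `v`
of the sphere `∂B(p, R)` misses `C`. Cut `C` by the line through `p` and `v`. By strict convexity,
two points of `B(p, R)` at distance `2R` are antipodal about `p`, and an antipodal pair in a closed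
half-plane lies on the cutting line, so it is `{v, 2p - v}`, which misses `C` by symmetry. By
compactness each half therefore has diameter `< 2R ≤ diam C`.
-/

open Metric Module

theorem IsCompact.exists_dist_eq_diam {α : Type*} [PseudoMetricSpace α] {s : Set α}
    (hs : IsCompact s) (hne : s.Nonempty) : ∃ x ∈ s, ∃ y ∈ s, dist x y = diam s := by
  obtain ⟨⟨x, y⟩, ⟨hx, hy⟩, hmax⟩ :=
    (hs.prod hs).exists_isMaxOn (hne.prod hne) continuous_dist.continuousOn
  refine ⟨x, hx, y, hy, le_antisymm (dist_le_diam_of_mem hs.isBounded hx hy) ?_⟩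
  exact diam_le_of_forall_dist_le dist_nonneg fun a ha b hb ↦ hmax (Set.mk_mem_prod ha hb)

section NormedSpace

variable {E : Type*} [NormedAddCommGroup E] [NormedSpace ℝ E] {C : Set E} {p : E} {R : ℝ}

theorem two_mul_dist_le_diam_of_symmetric (hC : Bornology.IsBounded C)
    (hsym : ∀ x ∈ C, (2 : ℝ) • p - x ∈ C) {z : E} (hz : z ∈ C) : 2 * dist z p ≤ diam C :=
  calc 2 * dist z p = dist z ((2 : ℝ) • p - z) := by
        rw [dist_eq_norm, dist_eq_norm, show z - ((2 : ℝ) • p - z) = (2 : ℝ) • (z - p) by module,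
          norm_smul, Real.norm_two]
    _ ≤ diam C := dist_le_diam_of_mem hC hz (hsym z hz)

theorem pos_of_interior_nonempty_of_subset_closedBall [Nontrivial E]
    (hint : (interior C).Nonempty) (hball : C ⊆ closedBall p R) : 0 < R := by
  by_contra! hR
  obtain ⟨y, hy⟩ := hint
  have hCp : C ⊆ {p} := hball.trans ((closedBall_subset_closedBall hR).trans closedBall_zero.subset)
  simpa [interior_singleton] using interior_mono hCp hy

theorem Convex.exists_mem_sphere_notMem [Nontrivial E] (hconv : Convex ℝ C)
    (hball : C ⊆ closedBall p R) (hR : 0 ≤ R) (hne : C ≠ closedBall p R) :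
    ∃ v ∈ sphere p R, v ∉ C := by
  by_contra! hsphere
  refine hne (hball.antisymm ?_)
  rw [← convexHull_sphere_eq_closedBall p hR]
  exact convexHull_min hsphere hconv

variable [StrictConvexSpace ℝ E]

theorem eq_midpoint_of_two_mul_le_dist {x y : E} (hx : dist x p ≤ R) (hy : dist y p ≤ R)
    (hxy : 2 * R ≤ dist x y) : p = midpoint ℝ x y := by
  have := dist_triangle x p y
  rw [dist_comm] at hy
  exact eq_midpoint_of_dist_eq_half (by linarith) (by linarith)

theorem diam_inter_halfspace_lt (f : E →L[ℝ] ℝ) (hC : IsCompact C) (hball : C ⊆ closedBall p R)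
    (hR : 0 < R) (hf : ∀ x ∈ C, dist x p = R → f (x - p) ≠ 0) :
    diam (C ∩ {x | 0 ≤ f (x - p)}) < 2 * R := by
  set S := C ∩ {x | 0 ≤ f (x - p)}
  have hS : IsCompact S := hC.inter_right (isClosed_le continuous_const (by fun_prop))
  rcases S.eq_empty_or_nonempty with hS₀ | hSne
  · rw [hS₀, diam_empty]
    positivity
  obtain ⟨x, ⟨hxC, hfx : 0 ≤ f (x - p)⟩, y, ⟨hyC, hfy : 0 ≤ f (y - p)⟩, hxy⟩ :=
    hS.exists_dist_eq_diam hSne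
  rw [← hxy]
  by_contra! hle
  have hxp : dist x p ≤ R := hball hxC
  have hyp : dist y p ≤ R := hball hyC
  have hmid := eq_midpoint_of_two_mul_le_dist hxp hyp hle
  have hsum : f (x - p) + f (y - p) = 0 := by
    rw [← map_add, hmid, left_sub_midpoint, right_sub_midpoint, ← smul_add, sub_add_sub_cancel',
      sub_self, smul_zero, map_zero]
  refine hf x hxC (by linarith [dist_triangle x p y, dist_comm p y]) ?_
  linarith

end NormedSpace

namespace Orientation

variable {E : Type*} [NormedAddCommGroup E] [InnerProductSpace ℝ E] [Fact (finrank ℝ E = 2)]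
  (o : Orientation ℝ E (Fin 2))

theorem eq_or_eq_neg_of_areaForm_eq_zero {v a : E} (h : o.areaForm v a = 0) (hn : ‖a‖ = ‖v‖) :
    a = v ∨ a = -v := by
  have hprod : ‖a - v‖ ^ 2 * ‖a + v‖ ^ 2 = 4 * o.areaForm v a ^ 2 := by
    have hsq := o.inner_sq_add_areaForm_sq v a
    rw [hn] at hsq
    rw [norm_sub_sq_real, norm_add_sq_real, hn, real_inner_comm]
    linear_combination (-4) * hsq
  rw [h] at hprod
  simpa [sub_eq_zero, add_eq_zero_iff_eq_neg] using hprod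

end Orientation

theorem not_ball_implies_partition
    (C : Set (EuclideanSpace ℝ (Fin 2))) (p : EuclideanSpace ℝ (Fin 2))
    (hC : IsCompact C) (hconv : Convex ℝ C) (hint : (interior C).Nonempty)
    (hsym : ∀ x ∈ C, (2 : ℝ) • p - x ∈ C)
    (hnotball : ¬ ∃ (q : EuclideanSpace ℝ (Fin 2)) (r : ℝ), 0 < r ∧
      C = Metric.closedBall q r) :
    ∃ C₁ C₂ : Set (EuclideanSpace ℝ (Fin 2)), C = C₁ ∪ C₂ ∧
      Metric.diam C₁ < Metric.diam C ∧ Metric.diam C₂ < Metric.diam C := by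
  have : Fact (finrank ℝ (EuclideanSpace ℝ (Fin 2)) = 2) := ⟨finrank_euclideanSpace_fin⟩
  obtain ⟨z, hzC, hzmax⟩ := hC.exists_isMaxOn (hint.mono interior_subset)
    (continuous_id.dist continuous_const).continuousOn
  set R := dist z p
  have hball : C ⊆ closedBall p R := fun x hx ↦ hzmax hx
  have hR : 0 < R := pos_of_interior_nonempty_of_subset_closedBall hint hball
  obtain ⟨v, hv, hvC⟩ := hconv.exists_mem_sphere_notMem hball hR.le fun h ↦ hnotball ⟨p, R, hR, h⟩
  set o := (EuclideanSpace.basisFun (Fin 2) ℝ).toBasis.orientation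
  set f := innerSL ℝ (o.rightAngleRotation (v - p))
  have hf : ∀ x ∈ C, dist x p = R → f (x - p) ≠ 0 := by
    intro x hx hxR hfx
    rw [innerSL_apply_apply, o.inner_rightAngleRotation_left] at hfx
    have hnorm : ‖x - p‖ = ‖v - p‖ := by
      rw [← dist_eq_norm, ← dist_eq_norm, hxR, mem_sphere.mp hv]
    rcases o.eq_or_eq_neg_of_areaForm_eq_zero hfx hnorm with h | h
    · exact hvC (sub_left_injective h ▸ hx)
    · exact hvC (by convert hsym x hx using 1; linear_combination (norm := module) h)
  have hf' : ∀ x ∈ C, dist x p = R → (-f) (x - p) ≠ 0 := by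
    simpa only [neg_apply, neg_ne_zero] using hf
  have hdiam : 2 * R ≤ diam C := two_mul_dist_le_diam_of_symmetric hC.isBounded hsym hzC
  refine ⟨C ∩ {x | 0 ≤ f (x - p)}, C ∩ {x | 0 ≤ (-f) (x - p)}, ?_,
    (diam_inter_halfspace_lt f hC hball hR hf).trans_le hdiam,
    (diam_inter_halfspace_lt (-f) hC hball hR hf').trans_le hdiam⟩
  rw [← Set.inter_union_distrib_left, eq_comm, Set.inter_eq_left]
  intro x _
  simpa only [Set.mem_union, Set.mem_ofPred_eq, neg_apply, neg_nonneg]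
    using le_total 0 (f (x - p))
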